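/- Path estimate for long exchanges: for every β ≥ 0, every positive integer N divisible by 3, all integers 1 ≤ x < y ≤ N, and every function f : Ω_N → ℝ, ν_N^β( (∇_{x,y} f)² ) ≤ 2 (2(y−x) − 1) e^{2β} Σ_{z=x}^{y−1} ν_N^β( (∇_{z,z+1} f)² ). -/

import Mathlib

open Finset Filter Topology MeasureTheory
open scoped BigOperators

attribute [local instance] Classical.propDecidable

namespace ABC

/-- Occupation indicator. Labels: `0 = A`, `1 = B`, `2 = C`. -/
def eta {N : ℕ} (ζ : Fin N → Fin 3) (α : Fin 3) (x : Fin N) : ℝ :=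
  if ζ x = α then 1 else 0

/-- The equal-density constraint defining `Ω_N`. -/
def inOmega {N : ℕ} (ζ : Fin N → Fin 3) : Prop :=
  ∀ α : Fin 3, 3 * (Finset.univ.filter (fun x => ζ x = α)).card = N

/-- The configuration space `Ω_N` as a finite set. -/
noncomputable def OmegaF (N : ℕ) : Finset (Fin N → Fin 3) :=
  Finset.univ.filter (fun ζ => inOmega ζ)

/-- The mean-field Hamiltonian `H_N`. -/
noncomputable def HN {N : ℕ} (ζ : Fin N → Fin 3) : ℝ :=
  (1 / (N : ℝ) ^ 2) *
    ∑ x : Fin N, ∑ y : Fin N,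
      if (x : ℕ) < (y : ℕ) then
        eta ζ 0 x * eta ζ 2 y + eta ζ 1 x * eta ζ 0 y + eta ζ 2 x * eta ζ 1 y
      else 0

/-- The partition function `Z_N^β`. -/
noncomputable def Zpart (N : ℕ) (β : ℝ) : ℝ :=
  ∑ ζ ∈ OmegaF N, Real.exp (-(β * N * HN ζ))

/-- The Gibbs measure `ν_N^β`. -/
noncomputable def nu (N : ℕ) (β : ℝ) (ζ : Fin N → Fin 3) : ℝ :=
  Real.exp (-(β * N * HN ζ)) / Zpart N β

/-- Expectation with respect to `ν_N^β`. -/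
noncomputable def expect (N : ℕ) (β : ℝ) (f : (Fin N → Fin 3) → ℝ) : ℝ :=
  ∑ ζ ∈ OmegaF N, nu N β ζ * f ζ

/-- Variance with respect to `ν_N^β`. -/
noncomputable def varNu (N : ℕ) (β : ℝ) (f : (Fin N → Fin 3) → ℝ) : ℝ :=
  expect N β (fun ζ => (f ζ - expect N β f) ^ 2)

/-- The configuration `ζ^{x,y}` obtained by exchanging the values at `x` and `y`. -/
def exch {N : ℕ} (ζ : Fin N → Fin 3) (x y : Fin N) : Fin N → Fin 3 :=
  fun z => if z = x then ζ y else if z = y then ζ x else ζ z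

/-- The gradient `∇_{x,y} f`. -/
def grad {N : ℕ} (f : (Fin N → Fin 3) → ℝ) (x y : Fin N) (ζ : Fin N → Fin 3) : ℝ :=
  f (exch ζ x y) - f ζ

/-- Cyclic successor `x + 1` in `Z_N`. -/
def fsucc {N : ℕ} (x : Fin N) : Fin N := ⟨(x.val + 1) % N, Nat.mod_lt _ x.pos⟩

/-- Nearest-neighbour jump rates `c_x^{β,N}`. -/
noncomputable def cnn {N : ℕ} (β : ℝ) (x : Fin N) (ζ : Fin N → Fin 3) : ℝ :=
  if (ζ x = 0 ∧ ζ (fsucc x) = 2) ∨ (ζ x = 2 ∧ ζ (fsucc x) = 1) ∨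
      (ζ x = 1 ∧ ζ (fsucc x) = 0) then
    Real.exp (-(β / (2 * N)))
  else Real.exp (β / (2 * N))

/-- Dirichlet form `D_N^β` of the ABC generator. -/
noncomputable def Dnn (N : ℕ) (β : ℝ) (f : (Fin N → Fin 3) → ℝ) : ℝ :=
  (1 / 2) * ∑ x : Fin N, expect N β (fun ζ => cnn β x ζ * (grad f x (fsucc x) ζ) ^ 2)

/-- The site of `Z_N` corresponding to the integer `z` (taken modulo `N`). -/
def site {N : ℕ} (hN : 0 < N) (z : ℕ) : Fin N := ⟨z % N, Nat.mod_lt _ hN⟩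

/-!
Write `y = x + n + 1`. The exchange of `x` and `y` is the product of the `2n + 1` nearest-neighbour
exchanges along the bonds `x + n, …, x + 1, x, x + 1, …, x + n`. Telescoping `f` along this path
and Cauchy–Schwarz bound `(∇_{x,y} f)²` by `2n + 1` times the sum of the squared nearest-neighbour
gradients at the intermediate configurations. A nearest-neighbour exchange changes `N² H_N` by at
most `1` on `Ω_N` (for the bond `(N - 1, 0)` because the equal densities make `H_N` invariant under
rotations of `Z_N`), so along a path of length at most `2N` the Gibbs weight changes by a factor at
most `e^{2β}`, and the change of variables to the intermediate configuration costs at most that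
factor. Finally, every bond in `[x, y)` occurs at most twice in the path.
-/

open Equiv

lemma sq_sub_le_mul_sum_sq (u : ℕ → ℝ) (m : ℕ) :
    (u m - u 0) ^ 2 ≤ m * ∑ k ∈ range m, (u (k + 1) - u k) ^ 2 := by
  rw [← Finset.sum_range_sub]
  simpa using sq_sum_le_card_mul_sum_sq (s := range m) (f := fun k => u (k + 1) - u k)

/-- With `0 = A`, `1 = B`, `2 = C`, the ordered pairs `AC`, `BA`, `CB` counted by `H_N` are exactly
those with `q = p + 2`. -/
def pairEnergy (p q : Fin 3) : ℝ := if q = p + 2 then 1 else 0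

def energy {N : ℕ} (ζ : Fin N → Fin 3) : ℝ :=
  ∑ x : Fin N, ∑ y : Fin N, if x < y then pairEnergy (ζ x) (ζ y) else 0

section Energy

variable {N : ℕ}

lemma eta_mul_add_eq_pairEnergy (ζ : Fin N → Fin 3) (x y : Fin N) :
    eta ζ 0 x * eta ζ 2 y + eta ζ 1 x * eta ζ 0 y + eta ζ 2 x * eta ζ 1 y =
      pairEnergy (ζ x) (ζ y) := by
  unfold eta pairEnergy
  generalize ζ x = p, ζ y = q
  fin_cases p <;> fin_cases q <;> simp

lemma HN_eq_energy (ζ : Fin N → Fin 3) : HN ζ = energy ζ / N ^ 2 := by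
  simp only [HN, energy, eta_mul_add_eq_pairEnergy, ← Fin.lt_def]
  ring

lemma exch_eq_comp_swap (ζ : Fin N → Fin 3) (u v : Fin N) : exch ζ u v = ζ ∘ swap u v := by
  funext w
  simp only [exch, Function.comp_apply, swap_apply_def]
  split_ifs <;> rfl

lemma inOmega_comp_perm {ζ : Fin N → Fin 3} (hζ : inOmega ζ) (σ : Perm (Fin N)) :
    inOmega (ζ ∘ σ) := by
  intro α
  have hcard : #{x | (ζ ∘ σ) x = α} = #{x | ζ x = α} := Finset.card_equiv σ (by simp)
  rw [hcard, hζ α]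

lemma card_label {ζ : Fin N → Fin 3} (hζ : inOmega ζ) (α : Fin 3) :
    (#{x | ζ x = α} : ℝ) = N / 3 := by
  rw [eq_div_iff three_ne_zero, mul_comm]
  exact_mod_cast hζ α

lemma sum_pairEnergy_left {ζ : Fin N → Fin 3} (hζ : inOmega ζ) (a : Fin 3) :
    ∑ y, pairEnergy a (ζ y) = N / 3 := by
  simp only [pairEnergy, Finset.sum_boole, card_label hζ]

lemma sum_pairEnergy_right {ζ : Fin N → Fin 3} (hζ : inOmega ζ) (a : Fin 3) :
    ∑ x, pairEnergy (ζ x) a = N / 3 := by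
  have hiff : ∀ p : Fin 3, a = p + 2 ↔ p = a + 1 := by revert a; decide
  simp only [pairEnergy, hiff, Finset.sum_boole, card_label hζ]

lemma energy_comp_perm_sub (ζ : Fin N → Fin 3) (σ : Perm (Fin N)) :
    energy (ζ ∘ σ) - energy ζ = ∑ x, ∑ y,
      ((if σ.symm x < σ.symm y then 1 else 0) - (if x < y then 1 else 0)) *
        pairEnergy (ζ x) (ζ y) := by
  have hre : energy (ζ ∘ σ) = ∑ x, ∑ y,
      (if σ.symm x < σ.symm y then 1 else 0) * pairEnergy (ζ x) (ζ y) := by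
    rw [energy, ← σ.symm.sum_comp]
    refine Finset.sum_congr rfl fun x _ => ?_
    rw [← σ.symm.sum_comp]
    simp [ite_mul]
  rw [hre, energy]
  simp only [sub_mul, ite_mul, one_mul, zero_mul, Finset.sum_sub_distrib]

/-- Moving the last site to the front trades its pairs `(ζ x, ζ last)` for pairs
`(ζ last, ζ x)`; the equal densities make the two counts agree. -/
lemma energy_comp_finRotate_symm {n : ℕ} {ζ : Fin (n + 1) → Fin 3} (hζ : inOmega ζ) :
    energy (ζ ∘ (finRotate (n + 1)).symm) = energy ζ := by
  rw [← sub_eq_zero, energy_comp_perm_sub]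
  have hcoef : ∀ x y : Fin (n + 1),
      ((if finRotate (n + 1) x < finRotate (n + 1) y then (1 : ℝ) else 0) -
        (if x < y then 1 else 0)) =
      (if x = Fin.last n then 1 else 0) - (if y = Fin.last n then 1 else 0) := by
    intro x y
    simp only [Fin.lt_def, coe_finRotate, Fin.ext_iff, Fin.val_last]
    have := x.isLt; have := y.isLt
    split_ifs <;> first | (exfalso; omega) | norm_num
  simp only [symm_symm, hcoef, sub_mul, ite_mul, one_mul, zero_mul, Finset.sum_sub_distrib,
    Finset.sum_ite_eq', Finset.mem_univ, if_true, Finset.sum_ite_irrel, Finset.sum_const_zero]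
  rw [sum_pairEnergy_left hζ, sum_pairEnergy_right hζ, sub_self]

lemma abs_pairEnergy_sub_le (p q : Fin 3) : |pairEnergy q p - pairEnergy p q| ≤ 1 := by
  unfold pairEnergy
  split_ifs <;> norm_num

lemma energy_comp_swap_zero_one_sub {n : ℕ} (ζ : Fin (n + 2) → Fin 3) :
    energy (ζ ∘ swap 0 1) - energy ζ = pairEnergy (ζ 1) (ζ 0) - pairEnergy (ζ 0) (ζ 1) := by
  have hcoef : ∀ x y : Fin (n + 2),
      ((if swap 0 1 x < swap 0 1 y then (1 : ℝ) else 0) - (if x < y then 1 else 0)) =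
      (if x = 1 then if y = 0 then 1 else 0 else 0) -
        (if x = 0 then if y = 1 then 1 else 0 else 0) := by
    intro x y
    simp only [swap_apply_def, Fin.lt_def, Fin.ext_iff]
    split_ifs <;> (try simp only [Fin.val_zero, Fin.val_one] at *) <;>
      first | (exfalso; omega) | norm_num
  rw [energy_comp_perm_sub, symm_swap]
  simp only [hcoef, sub_mul, ite_mul, one_mul, zero_mul, Finset.sum_sub_distrib,
    Finset.sum_ite_eq', Finset.mem_univ, if_true, Finset.sum_ite_irrel, Finset.sum_const_zero]

lemma energy_comp_finRotate_pow_inv {n : ℕ} (k : ℕ) {ζ : Fin (n + 1) → Fin 3} (hζ : inOmega ζ) :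
    energy (ζ ∘ ⇑(finRotate (n + 1) ^ k)⁻¹) = energy ζ := by
  induction k generalizing ζ with
  | zero => rfl
  | succ k ih =>
    rw [pow_succ, mul_inv_rev, Perm.coe_mul, ← Function.comp_assoc,
      ih (inOmega_comp_perm hζ _), Perm.inv_def, energy_comp_finRotate_symm hζ]

lemma val_finRotate_pow_apply {n : ℕ} (k : ℕ) (i : Fin (n + 1)) :
    ((finRotate (n + 1) ^ k) i : ℕ) = (i + k) % (n + 1) := by
  induction k with
  | zero => simp [Nat.mod_eq_of_lt i.isLt]
  | succ k ih =>
    rw [pow_succ', Perm.mul_apply, finRotate_apply, Fin.val_add, ih, Fin.val_one', ← Nat.add_mod,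
      add_assoc]

/-- By translation invariance every bond of `Z_N` behaves like the bond `(0, 1)`. -/
lemma abs_energy_exch_site_succ_sub_le {N : ℕ} (hN : 0 < N) {ζ : Fin N → Fin 3}
    (hζ : inOmega ζ) (z : ℕ) :
    |energy (exch ζ (site hN z) (site hN (z + 1))) - energy ζ| ≤ 1 := by
  obtain ⟨n, rfl⟩ : ∃ n, N = n + 2 := ⟨N - 2, by have := hζ 0; omega⟩
  set π := finRotate (n + 2) ^ z
  have hsite : swap (site hN z) (site hN (z + 1)) = π * swap 0 1 * π⁻¹ := by
    rw [← swap_apply_apply]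
    congr 1 <;> ext <;> simp only [site, π, val_finRotate_pow_apply, Fin.val_zero, Fin.val_one,
      zero_add, add_comm 1 z]
  have hζπ : inOmega (ζ ∘ π) := inOmega_comp_perm hζ π
  have hback : energy ζ = energy (ζ ∘ π) := by
    have h := energy_comp_finRotate_pow_inv z hζπ
    rwa [Function.comp_assoc, ← Perm.coe_mul, mul_inv_cancel, Perm.coe_one,
      Function.comp_id] at h
  rw [exch_eq_comp_swap, hsite, Perm.coe_mul, Perm.coe_mul, ← Function.comp_assoc,
    ← Function.comp_assoc, energy_comp_finRotate_pow_inv z (inOmega_comp_perm hζπ _), hback,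
    energy_comp_swap_zero_one_sub]
  exact abs_pairEnergy_sub_le _ _

end Energy

section Path

variable {N : ℕ} (hN : 0 < N)

def bondSwap (z : ℕ) : Perm (Fin N) := swap (site hN z) (site hN (z + 1))

def pathPerm (b : ℕ → ℕ) (k : ℕ) : Perm (Fin N) :=
  ((List.range k).map fun j => bondSwap hN (b j)).prod

lemma pathPerm_zero (b : ℕ → ℕ) : pathPerm hN b 0 = 1 := rfl

lemma comp_pathPerm_succ (b : ℕ → ℕ) (k : ℕ) (ζ : Fin N → Fin 3) :
    ζ ∘ pathPerm hN b (k + 1) =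
      exch (ζ ∘ pathPerm hN b k) (site hN (b k)) (site hN (b k + 1)) := by
  rw [pathPerm, List.prod_range_succ, Perm.coe_mul, exch_eq_comp_swap, bondSwap]
  rfl

lemma energy_comp_pathPerm_le (b : ℕ → ℕ) {ζ : Fin N → Fin 3} (hζ : inOmega ζ) (k : ℕ) :
    energy (ζ ∘ pathPerm hN b k) ≤ energy ζ + k := by
  induction k with
  | zero => simp [pathPerm_zero]
  | succ k ih =>
    have hstep :=
      abs_energy_exch_site_succ_sub_le hN (inOmega_comp_perm hζ (pathPerm hN b k)) (b k)
    rw [comp_pathPerm_succ]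
    push_cast
    linarith [(abs_le.mp hstep).2]

lemma site_ne_of_lt {a b : ℕ} (hab : a < b) (hba : b < a + N) : site hN a ≠ site hN b := by
  obtain ⟨j, rfl⟩ := Nat.exists_eq_add_of_le hab.le
  intro h
  have hmod : a + 0 ≡ a + j [MOD N] := congrArg Fin.val h
  have hdvd : N ∣ j := Nat.modEq_zero_iff_dvd.mp (Nat.ModEq.add_left_cancel' a hmod).symm
  exact absurd (Nat.le_of_dvd (by omega) hdvd) (by omega)

lemma dist_two_mul_add_one_self (n : ℕ) : Nat.dist (2 * n + 1) n = n + 1 := by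
  unfold Nat.dist; omega

/-- The bonds `x + n, …, x + 1, x, x + 1, …, x + n`. -/
def bubbleBond (x n k : ℕ) : ℕ := x + Nat.dist k n

lemma pathPerm_bubbleBond (x : ℕ) {n : ℕ} (hn : n + 1 < N) :
    pathPerm hN (bubbleBond x n) (2 * n + 1) = swap (site hN x) (site hN (x + n + 1)) := by
  induction n with
  | zero => simp [pathPerm, bubbleBond, bondSwap]
  | succ n ih =>
    have hsplit : pathPerm hN (bubbleBond x (n + 1)) (2 * (n + 1) + 1) =
        bondSwap hN (x + n + 1) * pathPerm hN (bubbleBond x n) (2 * n + 1) *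
          bondSwap hN (x + n + 1) := by
      rw [show 2 * (n + 1) + 1 = 2 * n + 1 + 1 + 1 by ring, pathPerm, List.prod_range_succ,
        List.prod_range_succ']
      simp only [pathPerm, bubbleBond, Nat.dist_succ_succ, Nat.dist_zero_left,
        dist_two_mul_add_one_self, add_assoc]
    rw [hsplit, ih (by omega), bondSwap,
      swap_mul_swap_mul_swap (site_ne_of_lt hN (by omega) (by omega))
        (site_ne_of_lt hN (by omega) (by omega)), swap_comm]
    rfl

lemma sum_range_bubbleBond_le (a : ℕ → ℝ) (ha : ∀ z, 0 ≤ a z) (x n : ℕ) :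
    ∑ k ∈ range (2 * n + 1), a (bubbleBond x n k) ≤ 2 * ∑ z ∈ Ico x (x + n + 1), a z := by
  induction n with
  | zero =>
    simp only [bubbleBond, Nat.dist_self, Nat.mul_zero, zero_add, Finset.sum_range_one,
      add_zero, Finset.Ico_add_one_right_eq_Icc, Finset.Icc_self, Finset.sum_singleton]
    linarith [ha x]
  | succ n ih =>
    rw [show 2 * (n + 1) + 1 = 2 * n + 1 + 1 + 1 by ring, Finset.sum_range_succ,
      Finset.sum_range_succ', Finset.sum_Ico_succ_top (by omega)]
    simp only [bubbleBond, Nat.dist_succ_succ, Nat.dist_zero_left, dist_two_mul_add_one_self,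
      ← add_assoc] at ih ⊢
    linarith [ha (x + n + 1)]

end Path

section Gibbs

variable {N : ℕ} {β : ℝ}

lemma nu_nonneg (ζ : Fin N → Fin 3) : 0 ≤ nu N β ζ :=
  div_nonneg (Real.exp_pos _).le (Finset.sum_nonneg fun _ _ => (Real.exp_pos _).le)

lemma expect_nonneg {g : (Fin N → Fin 3) → ℝ} (hg : ∀ ζ, 0 ≤ g ζ) : 0 ≤ expect N β g :=
  Finset.sum_nonneg fun ζ _ => mul_nonneg (nu_nonneg ζ) (hg ζ)

lemma expect_mono {g h : (Fin N → Fin 3) → ℝ} (hgh : ∀ ζ, g ζ ≤ h ζ) :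
    expect N β g ≤ expect N β h :=
  Finset.sum_le_sum fun ζ _ => mul_le_mul_of_nonneg_left (hgh ζ) (nu_nonneg ζ)

lemma expect_const_mul_sum (c : ℝ) (s : Finset ℕ) (g : ℕ → (Fin N → Fin 3) → ℝ) :
    expect N β (fun ζ => c * ∑ k ∈ s, g k ζ) = c * ∑ k ∈ s, expect N β (g k) := by
  simp only [expect, Finset.mul_sum]
  rw [Finset.sum_comm]
  exact Finset.sum_congr rfl fun _ _ => Finset.sum_congr rfl fun _ _ => by ring

lemma nu_le_exp_mul_nu (hβ : 0 ≤ β) {ζ ξ : Fin N → Fin 3} {m : ℝ}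
    (h : energy ξ ≤ energy ζ + m) : nu N β ζ ≤ Real.exp (β * m / N) * nu N β ξ := by
  have hweight : ∀ η : Fin N → Fin 3, β * N * HN η = β * energy η / N := fun η => by
    rw [HN_eq_energy]
    rcases eq_or_ne (N : ℝ) 0 with h0 | h0
    · simp [h0]
    · field_simp
  rw [nu, nu, hweight, hweight, mul_div_assoc', ← Real.exp_add]
  gcongr
  · exact Finset.sum_nonneg fun _ _ => (Real.exp_pos _).le
  have hle : β * energy ξ / N ≤ β * (energy ζ + m) / N := by gcongr
  rw [mul_add, add_div] at hle
  linarith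

lemma expect_comp_perm_le (σ : Perm (Fin N)) {K : ℝ}
    (hK : ∀ ζ, inOmega ζ → nu N β ζ ≤ K * nu N β (ζ ∘ σ))
    {g : (Fin N → Fin 3) → ℝ} (hg : ∀ ζ, 0 ≤ g ζ) :
    expect N β (fun ζ => g (ζ ∘ σ)) ≤ K * expect N β g := by
  have hreindex : ∑ ζ ∈ OmegaF N, nu N β (ζ ∘ σ) * g (ζ ∘ σ) = expect N β g := by
    refine Finset.sum_nbij' (· ∘ σ) (· ∘ ⇑σ⁻¹) ?_ ?_ ?_ ?_ fun _ _ => rfl <;>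
      intro ζ hζ <;> simp only [OmegaF, Finset.mem_filter, Finset.mem_univ, true_and] at hζ ⊢
    · exact inOmega_comp_perm hζ σ
    · exact inOmega_comp_perm hζ σ⁻¹
    · simp [Function.comp_assoc]
    · simp [Function.comp_assoc]
  rw [← hreindex, expect, Finset.mul_sum]
  refine Finset.sum_le_sum fun ζ hζ => ?_
  rw [← mul_assoc]
  exact mul_le_mul_of_nonneg_right (hK ζ (Finset.mem_filter.mp hζ).2) (hg _)

end Gibbs

lemma expect_sq_sub_comp_pathPerm_le {N : ℕ} {β : ℝ} (hβ : 0 ≤ β) (hN : 0 < N) (b : ℕ → ℕ)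
    {m : ℕ} (hm : m ≤ 2 * N) (f : (Fin N → Fin 3) → ℝ) :
    expect N β (fun ζ => (f (ζ ∘ pathPerm hN b m) - f ζ) ^ 2) ≤
      m * Real.exp (2 * β) * ∑ k ∈ range m,
        expect N β (fun ζ => (grad f (site hN (b k)) (site hN (b k + 1)) ζ) ^ 2) := by
  set g := fun k ζ => (grad f (site hN (b k)) (site hN (b k + 1)) ζ) ^ 2
  have htelescope : ∀ ζ, (f (ζ ∘ pathPerm hN b m) - f ζ) ^ 2 ≤
      m * ∑ k ∈ range m, g k (ζ ∘ pathPerm hN b k) := fun ζ => by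
    have h := sq_sub_le_mul_sum_sq (fun k => f (ζ ∘ pathPerm hN b k)) m
    simp only [comp_pathPerm_succ, pathPerm_zero, Perm.coe_one, Function.comp_id] at h
    exact h
  have hchange : ∀ k ∈ range m, expect N β (fun ζ => g k (ζ ∘ pathPerm hN b k)) ≤
      Real.exp (2 * β) * expect N β (g k) := fun k hk => by
    refine expect_comp_perm_le _ (fun ζ hζ => ?_) (fun ζ => sq_nonneg _)
    have hk : β * k / N ≤ 2 * β := by
      rw [div_le_iff₀ (by exact_mod_cast hN)]
      have : (k : ℝ) ≤ 2 * N := by exact_mod_cast (Finset.mem_range.mp hk).le.trans hm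
      nlinarith
    calc nu N β ζ ≤ Real.exp (β * k / N) * nu N β (ζ ∘ pathPerm hN b k) :=
          nu_le_exp_mul_nu hβ (energy_comp_pathPerm_le hN b hζ k)
      _ ≤ Real.exp (2 * β) * nu N β (ζ ∘ pathPerm hN b k) := by gcongr; exact nu_nonneg _
  calc _ ≤ expect N β (fun ζ => m * ∑ k ∈ range m, g k (ζ ∘ pathPerm hN b k)) :=
        expect_mono htelescope
    _ = m * ∑ k ∈ range m, expect N β (fun ζ => g k (ζ ∘ pathPerm hN b k)) :=
        expect_const_mul_sum _ _ _
    _ ≤ m * ∑ k ∈ range m, Real.exp (2 * β) * expect N β (g k) := by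
        gcongr with k hk; exact hchange k hk
    _ = _ := by rw [← Finset.mul_sum, mul_assoc]

theorem path_estimate_general (β : ℝ) (hβ : 0 ≤ β) (N : ℕ) (hN : 0 < N)
    (x y : ℕ) (hx : 1 ≤ x) (hxy : x < y) (hy : y ≤ N)
    (f : (Fin N → Fin 3) → ℝ) :
    expect N β (fun ζ => (grad f (site hN x) (site hN y) ζ) ^ 2)
      ≤ 2 * (2 * ((y : ℝ) - (x : ℝ)) - 1) * Real.exp (2 * β) *
        ∑ z ∈ Finset.Ico x y,
          expect N β (fun ζ => (grad f (site hN z) (site hN (z + 1)) ζ) ^ 2) := by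
  obtain ⟨n, rfl⟩ : ∃ n, y = x + n + 1 := ⟨y - x - 1, by omega⟩
  have hbubble : ∀ ζ, grad f (site hN x) (site hN (x + n + 1)) ζ =
      f (ζ ∘ pathPerm hN (bubbleBond x n) (2 * n + 1)) - f ζ := fun ζ => by
    rw [grad, pathPerm_bubbleBond hN x (by omega), exch_eq_comp_swap]
  have hmultiplicity := sum_range_bubbleBond_le
    (fun z => expect N β (fun ζ => (grad f (site hN z) (site hN (z + 1)) ζ) ^ 2))
    (fun _ => expect_nonneg fun _ => sq_nonneg _) x n
  simp only [hbubble]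
  calc _ ≤ ((2 * n + 1 : ℕ) : ℝ) * Real.exp (2 * β) * ∑ k ∈ range (2 * n + 1),
          expect N β (fun ζ => (grad f (site hN (bubbleBond x n k))
            (site hN (bubbleBond x n k + 1)) ζ) ^ 2) :=
        expect_sq_sub_comp_pathPerm_le hβ hN _ (by omega) f
    _ ≤ ((2 * n + 1 : ℕ) : ℝ) * Real.exp (2 * β) * (2 * ∑ z ∈ Ico x (x + n + 1),
          expect N β (fun ζ => (grad f (site hN z) (site hN (z + 1)) ζ) ^ 2)) :=
        mul_le_mul_of_nonneg_left hmultiplicity (by positivity)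
    _ = _ := by push_cast; ring

/-- Path estimate for long exchanges: for `1 ≤ x < y ≤ N`,
`ν((∇_{x,y}f)²) ≤ 2(2(y−x)−1) e^{2β} Σ_{z=x}^{y−1} ν((∇_{z,z+1}f)²)`. -/
theorem path_estimate (β : ℝ) (hβ : 0 ≤ β) (N : ℕ) (hN : 0 < N) (h3 : 3 ∣ N)
    (x y : ℕ) (hx : 1 ≤ x) (hxy : x < y) (hy : y ≤ N)
    (f : (Fin N → Fin 3) → ℝ) :
    expect N β (fun ζ => (grad f (site hN x) (site hN y) ζ) ^ 2)
      ≤ 2 * (2 * ((y : ℝ) - (x : ℝ)) - 1) * Real.exp (2 * β) *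
        ∑ z ∈ Finset.Ico x y,
          expect N β (fun ζ => (grad f (site hN z) (site hN (z + 1)) ζ) ^ 2) :=
  path_estimate_general β hβ N hN x y hx hxy hy f

end ABC
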